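/- arXiv:2307.01790 — 3 statements merged into one kernel-verified Lean document; each statement's English description precedes it below -/
import Mathlib

section
/- Let A be an n×n and B an m×m complex positive semidefinite matrix, and let f : ℝ → ℝ be a continuous function satisfying f(s·t) = f(s)·f(t) for all s, t ≥ 0 and f(0) = 0. Then applying the continuous functional calculus gives cfc f (A ⊗ₖ B) = (cfc f A) ⊗ₖ (cfc f B). -/
open Matrix Kronecker ComplexOrder

/-- The `r`-th power of a complex square matrix, obtained via the (real) continuous
functional calculus applied to `t ↦ t ^ r` (real `rpow`, so that `0 ^ r = 0` for `r ≠ 0`). -/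
noncomputable def matRpow {k : Type*} [Fintype k] [DecidableEq k]
    (A : Matrix k k ℂ) (r : ℝ) : Matrix k k ℂ :=
  cfc (fun x : ℝ => x ^ r) A

/-- The absolute value `|A| := (Aᴴ · A)^{1/2}` of a complex square matrix, where the square
root is taken via the continuous functional calculus. -/
noncomputable def matAbs {k : Type*} [Fintype k] [DecidableEq k]
    (A : Matrix k k ℂ) : Matrix k k ℂ :=
  matRpow (Aᴴ * A) (1 / 2 : ℝ)

/-!
Diagonalize `A = U diag(λ) U*` and `B = V diag(μ) V*`. Then
`A ⊗ₖ B = (U ⊗ₖ V) diag(λᵢ μⱼ) (U ⊗ₖ V)*`, and the functional calculus acts on a unitary conjugate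
of a real diagonal matrix by applying `f` to the diagonal entries. Since the eigenvalues are
nonnegative, `f (λᵢ μⱼ) = f λᵢ * f μⱼ` turns the result into `cfc f A ⊗ₖ cfc f B`.
On the finite spectrum of a real diagonal matrix, `f` agrees with a Lagrange interpolation
polynomial, whose functional calculus is polynomial evaluation; this computes `cfc f` there.
-/

open Polynomial Unitary

namespace Matrix

variable {𝕜 p : Type*} [RCLike 𝕜] [Fintype p] [DecidableEq p]

lemma spectrum_real_diagonal_ofReal (v : p → ℝ) :
    spectrum ℝ (diagonal (RCLike.ofReal ∘ v) : Matrix p p 𝕜) = Set.range v := by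
  ext x
  rw [← spectrum.algebraMap_mem_iff 𝕜, spectrum_diagonal, RCLike.algebraMap_eq_ofReal]
  simp

omit [Fintype p] in
lemma isSelfAdjoint_diagonal_ofReal (v : p → ℝ) :
    IsSelfAdjoint (diagonal (RCLike.ofReal ∘ v) : Matrix p p 𝕜) :=
  isHermitian_diagonal_of_self_adjoint _ (by ext i; simp)

lemma cfc_diagonal_ofReal (f : ℝ → ℝ) (v : p → ℝ) :
    cfc f (diagonal (RCLike.ofReal ∘ v) : Matrix p p 𝕜) = diagonal (RCLike.ofReal ∘ f ∘ v) := by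
  set q := Lagrange.interpolate (Finset.univ.image v) id f
  have hq (i : p) : q.eval (v i) = f (v i) :=
    Lagrange.eval_interpolate_at_node f (Set.injOn_id _)
      (Finset.mem_image_of_mem v (Finset.mem_univ i))
  calc cfc f (diagonal (RCLike.ofReal ∘ v) : Matrix p p 𝕜)
      = cfc q.eval (diagonal (RCLike.ofReal ∘ v) : Matrix p p 𝕜) := by
        refine cfc_congr ?_
        rw [spectrum_real_diagonal_ofReal]
        rintro _ ⟨i, rfl⟩
        exact (hq i).symm
    _ = diagonalAlgHom ℝ (aeval (RCLike.ofReal ∘ v : p → 𝕜) q) := by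
        rw [cfc_polynomial q _ (isSelfAdjoint_diagonal_ofReal v), ← aeval_algHom_apply,
          diagonalAlgHom_apply]
    _ = diagonal (RCLike.ofReal ∘ f ∘ v) := by
        ext i j
        simp [aeval_pi_apply, ← RCLike.algebraMap_eq_ofReal,
          aeval_algebraMap_apply_eq_algebraMap_eval, hq, Function.comp_def]

lemma cfc_conjStarAlgAut (f : ℝ → ℝ) (u : unitary (Matrix p p 𝕜)) {a : Matrix p p 𝕜}
    (ha : IsSelfAdjoint a) :
    cfc f (conjStarAlgAut 𝕜 _ u a) = conjStarAlgAut 𝕜 _ u (cfc f a) :=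
  (StarAlgHomClass.map_cfc (conjStarAlgAut 𝕜 _ u) f a (finite_real_spectrum.continuousOn f)
    ((continuous_const.mul continuous_id).mul continuous_const) ha (ha.conjugate _)).symm

lemma cfc_conjStarAlgAut_diagonal_ofReal (f : ℝ → ℝ) (u : unitary (Matrix p p 𝕜)) (v : p → ℝ) :
    cfc f (conjStarAlgAut 𝕜 _ u (diagonal (RCLike.ofReal ∘ v))) =
      conjStarAlgAut 𝕜 _ u (diagonal (RCLike.ofReal ∘ f ∘ v)) := by
  rw [cfc_conjStarAlgAut f u (isSelfAdjoint_diagonal_ofReal v), cfc_diagonal_ofReal]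

omit [RCLike 𝕜] in
lemma conjStarAlgAut_kronecker {R q : Type*} [CommRing R] [StarRing R] [Fintype q]
    [DecidableEq q] (u : unitary (Matrix p p R)) (w : unitary (Matrix q q R))
    (x : Matrix p p R) (y : Matrix q q R) :
    conjStarAlgAut R _ u x ⊗ₖ conjStarAlgAut R _ w y =
      conjStarAlgAut R (Matrix (p × q) (p × q) R)
        ⟨(u : Matrix p p R) ⊗ₖ (w : Matrix q q R), kronecker_mem_unitary u.2 w.2⟩ (x ⊗ₖ y) := by
  simp only [conjStarAlgAut_apply, star_eq_conjTranspose]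
  rw [mul_kronecker_mul, mul_kronecker_mul, conjTranspose_kronecker]

omit [Fintype p] in
lemma diagonal_ofReal_kronecker {q : Type*} [DecidableEq q] (d : p → ℝ) (e : q → ℝ) :
    diagonal (RCLike.ofReal ∘ d : p → 𝕜) ⊗ₖ diagonal (RCLike.ofReal ∘ e) =
      diagonal (RCLike.ofReal ∘ fun ij : p × q ↦ d ij.1 * e ij.2) := by
  rw [diagonal_kronecker_diagonal]
  simp [Function.comp_def]

end Matrix

theorem cfc_kronecker_of_multiplicative_general {n m : ℕ}
    (A : Matrix (Fin n) (Fin n) ℂ) (B : Matrix (Fin m) (Fin m) ℂ)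
    (hA : A.PosSemidef) (hB : B.PosSemidef) (f : ℝ → ℝ)
    (hmul : ∀ s t : ℝ, 0 ≤ s → 0 ≤ t → f (s * t) = f s * f t) :
    cfc f (A ⊗ₖ B) = (cfc f A) ⊗ₖ (cfc f B) := by
  have hf_eigenvalues (i : Fin n) (j : Fin m) :
      f (hA.1.eigenvalues i * hB.1.eigenvalues j) =
        f (hA.1.eigenvalues i) * f (hB.1.eigenvalues j) :=
    hmul _ _ (hA.eigenvalues_nonneg i) (hB.eigenvalues_nonneg j)
  rw [hA.1.cfc_eq, hB.1.cfc_eq, IsHermitian.cfc, IsHermitian.cfc, conjStarAlgAut_kronecker,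
    diagonal_ofReal_kronecker]
  conv_lhs => rw [hA.1.spectral_theorem, hB.1.spectral_theorem, conjStarAlgAut_kronecker,
    diagonal_ofReal_kronecker, cfc_conjStarAlgAut_diagonal_ofReal]
  simp only [Function.comp_def, hf_eigenvalues]

/-- If `A`, `B` are positive semidefinite complex matrices and `f : ℝ → ℝ` is a continuous
function that is multiplicative on nonnegative reals with `f 0 = 0`, then
`cfc f (A ⊗ₖ B) = (cfc f A) ⊗ₖ (cfc f B)`. -/
theorem cfc_kronecker_of_multiplicative {n m : ℕ}
    (A : Matrix (Fin n) (Fin n) ℂ) (B : Matrix (Fin m) (Fin m) ℂ)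
    (hA : A.PosSemidef) (hB : B.PosSemidef) (f : ℝ → ℝ) (hf : Continuous f)
    (hmul : ∀ s t : ℝ, 0 ≤ s → 0 ≤ t → f (s * t) = f s * f t) (hf0 : f 0 = 0) :
    cfc f (A ⊗ₖ B) = (cfc f A) ⊗ₖ (cfc f B) :=
  cfc_kronecker_of_multiplicative_general A B hA hB f hmul
end

section
/- Let A be an n×n and B an m×m complex matrix, and suppose A = U·|A| and B = V·|B| for some matrices U and V (e.g. the partial isometries in the polar decompositions of A and B). Then A ⊗ₖ B = (U ⊗ₖ V)·|A ⊗ₖ B|, i.e. U ⊗ₖ V together with |A| ⊗ₖ |B| realizes a polar factorization of A ⊗ₖ B. -/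
open Matrix Kronecker ComplexOrder

/-!
`|A| ⊗ₖ |B|` is positive semidefinite and, by the mixed-product rule, squares to
`(A ⊗ₖ B)ᴴ (A ⊗ₖ B)`; uniqueness of positive square roots gives `|A ⊗ₖ B| = |A| ⊗ₖ |B|`,
and the mixed-product rule once more turns `(U ⊗ₖ V)(|A| ⊗ₖ |B|)` into `(U |A|) ⊗ₖ (V |B|)`.
-/

open scoped MatrixOrder

lemma CFC.sqrt_kronecker {𝕜 n m : Type*} [RCLike 𝕜] [Fintype n] [DecidableEq n] [Fintype m]
    [DecidableEq m] {A : Matrix n n 𝕜} {B : Matrix m m 𝕜} (hA : 0 ≤ A) (hB : 0 ≤ B) :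
    CFC.sqrt (A ⊗ₖ B) = CFC.sqrt A ⊗ₖ CFC.sqrt B := by
  have hsqrt : 0 ≤ CFC.sqrt A ⊗ₖ CFC.sqrt B :=
    ((CFC.sqrt_nonneg A).posSemidef.kronecker (CFC.sqrt_nonneg B).posSemidef).nonneg
  refine CFC.sqrt_unique ?_ hsqrt
  rw [← mul_kronecker_mul, CFC.sqrt_mul_sqrt_self A hA, CFC.sqrt_mul_sqrt_self B hB]

lemma matRpow_half_eq_sqrt {k : Type*} [Fintype k] [DecidableEq k] {M : Matrix k k ℂ}
    (hM : 0 ≤ M) : matRpow M (1 / 2 : ℝ) = CFC.sqrt M := by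
  rw [matRpow, CFC.sqrt_eq_real_sqrt M hM, cfcₙ_eq_cfc]
  refine cfc_congr fun x _ => ?_
  simp [Real.sqrt_eq_rpow, one_div]

lemma matAbs_eq_sqrt {k : Type*} [Fintype k] [DecidableEq k] (A : Matrix k k ℂ) :
    matAbs A = CFC.sqrt (Aᴴ * A) :=
  matRpow_half_eq_sqrt (posSemidef_conjTranspose_mul_self A).nonneg

lemma matAbs_kronecker {n m : Type*} [Fintype n] [DecidableEq n] [Fintype m] [DecidableEq m]
    (A : Matrix n n ℂ) (B : Matrix m m ℂ) : matAbs (A ⊗ₖ B) = matAbs A ⊗ₖ matAbs B := by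
  rw [matAbs_eq_sqrt, matAbs_eq_sqrt, matAbs_eq_sqrt, conjTranspose_kronecker,
    ← mul_kronecker_mul, CFC.sqrt_kronecker (posSemidef_conjTranspose_mul_self A).nonneg
      (posSemidef_conjTranspose_mul_self B).nonneg]

/-- If `A = U·|A|` and `B = V·|B|` then `A ⊗ₖ B = (U ⊗ₖ V)·|A ⊗ₖ B|`, i.e. `U ⊗ₖ V`
together with `|A| ⊗ₖ |B|` realizes a polar factorization of `A ⊗ₖ B`. -/
theorem kronecker_polar_factorization {n m : ℕ}
    (A U : Matrix (Fin n) (Fin n) ℂ) (B V : Matrix (Fin m) (Fin m) ℂ)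
    (hA : A = U * matAbs A) (hB : B = V * matAbs B) :
    A ⊗ₖ B = (U ⊗ₖ V) * matAbs (A ⊗ₖ B) := by
  rw [matAbs_kronecker, ← mul_kronecker_mul, ← hA, ← hB]
end

section
/- Let ρ₁, σ₁ be n×n and ρ₂, σ₂ be m×m complex positive semidefinite matrices, let 0 < α < 1 and z > 0. Then trace[(((σ₁ ⊗ₖ σ₂)^{(1−α)/(2z)}) · ((ρ₁ ⊗ₖ ρ₂)^{α/z}) · ((σ₁ ⊗ₖ σ₂)^{(1−α)/(2z)}))^z] = trace[((σ₁^{(1−α)/(2z)}) · (ρ₁^{α/z}) · (σ₁^{(1−α)/(2z)}))^z] · trace[((σ₂^{(1−α)/(2z)}) · (ρ₂^{α/z}) · (σ₂^{(1−α)/(2z)}))^z]. -/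
open Matrix Kronecker ComplexOrder

/-!
Diagonalise `A = U diag(λ) U*` and `B = V diag(μ) V*`. Then `U ⊗ V` is unitary and
`A ⊗ B = (U ⊗ V) diag(λᵢ μⱼ) (U ⊗ V)*`, so `f (A ⊗ B) = f A ⊗ f B` as soon as `f` is
multiplicative on the products `λᵢ μⱼ`; for positive semidefinite `A`, `B` this holds for
`t ↦ t ^ r` with any real `r`. Three applications of this turn the matrix inside the trace into
the Kronecker product of the two single-system matrices, and the trace of a Kronecker product is
the product of the traces.
-/

open scoped MatrixOrder

namespace Matrix

variable {k l : Type*} [Fintype k] [DecidableEq k] [Fintype l] [DecidableEq l]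

noncomputable def diagonalStarAlgHom {𝕜 : Type*} [RCLike 𝕜] : (k → 𝕜) →⋆ₐ[𝕜] Matrix k k 𝕜 :=
  { diagonalAlgHom 𝕜 with
    map_star' v := (diagonal_conjTranspose v).symm }

/-- No continuity of `f` is needed: the spectrum is finite. -/
lemma cfc_conjStarAlgAut_diagonal (f : ℝ → ℝ) (U : unitary (Matrix k k ℂ)) (d : k → ℝ) :
    cfc f (Unitary.conjStarAlgAut ℂ _ U (diagonal (RCLike.ofReal ∘ d)))
      = Unitary.conjStarAlgAut ℂ _ U (diagonal (RCLike.ofReal ∘ f ∘ d)) := by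
  -- instance search does not find the real functional calculus of the C⋆-algebra `k → ℂ`
  let _ : ContinuousFunctionalCalculus ℝ (k → ℂ) IsSelfAdjoint :=
    IsSelfAdjoint.instContinuousFunctionalCalculus
  have hsa : IsSelfAdjoint (RCLike.ofReal ∘ d : k → ℂ) := by
    ext i
    simp
  have hspec : (⋃ i, spectrum ℝ ((RCLike.ofReal ∘ d : k → ℂ) i)).Finite :=
    Set.finite_iUnion fun i => spectrum.scalar_eq (A := ℂ) (d i) ▸ Set.finite_singleton (d i)
  have hspec' : (spectrum ℝ (RCLike.ofReal ∘ d : k → ℂ)).Finite := by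
    rwa [Pi.spectrum_eq]
  have hcfc : cfc f (RCLike.ofReal ∘ d : k → ℂ) = RCLike.ofReal ∘ f ∘ d := by
    rw [cfc_map_pi (S := ℂ) (q := fun _ => IsSelfAdjoint) f _ (hspec.continuousOn f) hsa
      fun i => congrFun hsa i]
    funext i
    exact cfc_algebraMap (d i) f
  let φ : (k → ℂ) →⋆ₐ[ℂ] Matrix k k ℂ :=
    (Unitary.conjStarAlgAut ℂ _ U : Matrix k k ℂ →⋆ₐ[ℂ] Matrix k k ℂ).comp diagonalStarAlgHom
  have hφ : Continuous φ := LinearMap.continuous_of_finiteDimensional φ.toLinearMap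
  rw [← hcfc]
  exact (StarAlgHomClass.map_cfc φ f _ (hspec'.continuousOn f) hφ hsa (hsa.map φ)).symm

def kroneckerUnitary {R : Type*} [CommRing R] [StarRing R]
    (U : unitary (Matrix k k R)) (V : unitary (Matrix l l R)) :
    unitary (Matrix (k × l) (k × l) R) :=
  ⟨(U : Matrix k k R) ⊗ₖ (V : Matrix l l R), kronecker_mem_unitary U.2 V.2⟩

lemma kronecker_conjStarAlgAut {R : Type*} [CommRing R] [StarRing R]
    (U : unitary (Matrix k k R)) (V : unitary (Matrix l l R)) (A : Matrix k k R)
    (B : Matrix l l R) :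
    Unitary.conjStarAlgAut R _ U A ⊗ₖ Unitary.conjStarAlgAut R _ V B
      = Unitary.conjStarAlgAut R (Matrix (k × l) (k × l) R) (kroneckerUnitary U V) (A ⊗ₖ B) := by
  simp only [Unitary.conjStarAlgAut_apply, kroneckerUnitary, mul_kronecker_mul,
    star_eq_conjTranspose, conjTranspose_kronecker]

lemma IsHermitian.cfc_kronecker {A : Matrix k k ℂ} {B : Matrix l l ℂ} (hA : A.IsHermitian)
    (hB : B.IsHermitian) (f : ℝ → ℝ)
    (hf : ∀ x ∈ spectrum ℝ A, ∀ y ∈ spectrum ℝ B, f (x * y) = f x * f y) :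
    cfc f (A ⊗ₖ B) = cfc f A ⊗ₖ cfc f B := by
  have hdiag (c : k → ℝ) (d : l → ℝ) :
      diagonal (RCLike.ofReal ∘ c) ⊗ₖ diagonal (RCLike.ofReal ∘ d)
        = diagonal (RCLike.ofReal ∘ fun p : k × l => c p.1 * d p.2 : k × l → ℂ) := by
    rw [diagonal_kronecker_diagonal]
    simp [Function.comp_def]
  conv_lhs => rw [hA.spectral_theorem, hB.spectral_theorem]
  rw [hA.cfc_eq, hB.cfc_eq, IsHermitian.cfc, IsHermitian.cfc, kronecker_conjStarAlgAut,
    kronecker_conjStarAlgAut, hdiag, hdiag, cfc_conjStarAlgAut_diagonal]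
  congr 3
  ext ⟨i, j⟩
  exact hf _ (hA.eigenvalues_mem_spectrum_real i) _ (hB.eigenvalues_mem_spectrum_real j)

end Matrix

section

variable {k l : Type*} [Fintype k] [DecidableEq k] [Fintype l] [DecidableEq l]

lemma posSemidef_matRpow {A : Matrix k k ℂ} (hA : A.PosSemidef) (r : ℝ) :
    (matRpow A r).PosSemidef :=
  (cfc_nonneg fun _ hx => Real.rpow_nonneg (spectrum_nonneg_of_nonneg hA.nonneg hx) r).posSemidef

lemma posSemidef_matRpow_conjugate {A : Matrix k k ℂ} (hA : A.PosSemidef) (B : Matrix k k ℂ)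
    (r s : ℝ) : (matRpow B s * matRpow A r * matRpow B s).PosSemidef :=
  nonneg_iff_posSemidef.mp <|
    IsSelfAdjoint.conjugate_nonneg (posSemidef_matRpow hA r).nonneg (cfc_predicate _ B)

lemma matRpow_kronecker {A : Matrix k k ℂ} {B : Matrix l l ℂ} (hA : A.PosSemidef)
    (hB : B.PosSemidef) (r : ℝ) : matRpow (A ⊗ₖ B) r = matRpow A r ⊗ₖ matRpow B r :=
  hA.1.cfc_kronecker hB.1 _ fun _ hx _ hy =>
    Real.mul_rpow (spectrum_nonneg_of_nonneg hA.nonneg hx) (spectrum_nonneg_of_nonneg hB.nonneg hy)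

end

theorem renyi_az_multiplicative_of_lt_one_general {n m : ℕ}
    (ρ₁ σ₁ : Matrix (Fin n) (Fin n) ℂ) (ρ₂ σ₂ : Matrix (Fin m) (Fin m) ℂ)
    (hρ₁ : ρ₁.PosSemidef) (hσ₁ : σ₁.PosSemidef) (hρ₂ : ρ₂.PosSemidef) (hσ₂ : σ₂.PosSemidef)
    (α z : ℝ) :
    (matRpow (matRpow (σ₁ ⊗ₖ σ₂) ((1 - α) / (2 * z)) * matRpow (ρ₁ ⊗ₖ ρ₂) (α / z)
        * matRpow (σ₁ ⊗ₖ σ₂) ((1 - α) / (2 * z))) z).trace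
      = (matRpow (matRpow σ₁ ((1 - α) / (2 * z)) * matRpow ρ₁ (α / z)
            * matRpow σ₁ ((1 - α) / (2 * z))) z).trace
        * (matRpow (matRpow σ₂ ((1 - α) / (2 * z)) * matRpow ρ₂ (α / z)
            * matRpow σ₂ ((1 - α) / (2 * z))) z).trace := by
  rw [matRpow_kronecker hσ₁ hσ₂, matRpow_kronecker hρ₁ hρ₂, ← mul_kronecker_mul,
    ← mul_kronecker_mul, matRpow_kronecker (posSemidef_matRpow_conjugate hρ₁ σ₁ _ _)
      (posSemidef_matRpow_conjugate hρ₂ σ₂ _ _), trace_kronecker]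

/-- Multiplicativity of the α-z-Rényi quantity under Kronecker products, for
positive semidefinite matrices and `0 < α < 1`, `z > 0`. -/
theorem renyi_az_multiplicative_of_lt_one {n m : ℕ}
    (ρ₁ σ₁ : Matrix (Fin n) (Fin n) ℂ) (ρ₂ σ₂ : Matrix (Fin m) (Fin m) ℂ)
    (hρ₁ : ρ₁.PosSemidef) (hσ₁ : σ₁.PosSemidef) (hρ₂ : ρ₂.PosSemidef) (hσ₂ : σ₂.PosSemidef)
    (α z : ℝ) (hα₀ : 0 < α) (hα₁ : α < 1) (hz : 0 < z) :
    (matRpow (matRpow (σ₁ ⊗ₖ σ₂) ((1 - α) / (2 * z)) * matRpow (ρ₁ ⊗ₖ ρ₂) (α / z)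
        * matRpow (σ₁ ⊗ₖ σ₂) ((1 - α) / (2 * z))) z).trace
      = (matRpow (matRpow σ₁ ((1 - α) / (2 * z)) * matRpow ρ₁ (α / z)
            * matRpow σ₁ ((1 - α) / (2 * z))) z).trace
        * (matRpow (matRpow σ₂ ((1 - α) / (2 * z)) * matRpow ρ₂ (α / z)
            * matRpow σ₂ ((1 - α) / (2 * z))) z).trace :=
  renyi_az_multiplicative_of_lt_one_general ρ₁ σ₁ ρ₂ σ₂ hρ₁ hσ₁ hρ₂ hσ₂ α z
end
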